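/- Let p be a PDB over a finite set T of tuples such that every p(t) is rational, let a be the maximum over all tuples of the numerators and denominators of the probabilities p(t) (written as fractions of nonnegative integers with positive denominators), and let m = |T| + 3. Let E be a set of hyperedges such that the PDB is consistent w.r.t. E, let W be any set of possible worlds, and let p^min and p^max be the minimum and maximum of Σ_{w∈W} Pr(w) over all models Pr. Then each of p^min and p^max is a rational number expressible as a fraction η/δ with integers 0 ≤ η ≤ (m·a)^m and 0 < δ ≤ (m·a)^m. -/

import Mathlib

open Finset

variable {τ : Type*} [Fintype τ] [DecidableEq τ]

/-- An interpretation of a PDB `p`: a probability distribution over possible worlds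
(subsets of the set of tuples) whose marginals agree with `p`. -/
def IsInterp (p : τ → ℝ) (Pr : Finset τ → ℝ) : Prop :=
  (∀ w, 0 ≤ Pr w) ∧ (∑ w : Finset τ, Pr w = 1) ∧
  (∀ t : τ, ∑ w ∈ Finset.univ.filter (fun w => t ∈ w), Pr w = p t)

/-- A model of the PDB `p` w.r.t. the hyperedge set `E`: an interpretation assigning
probability 0 to every world containing some hyperedge of `E`. -/
def IsModel (p : τ → ℝ) (E : Set (Finset τ)) (Pr : Finset τ → ℝ) : Prop :=
  IsInterp p Pr ∧ ∀ w : Finset τ, (∃ e ∈ E, e ⊆ w) → Pr w = 0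

/-- The PDB `p` is consistent w.r.t. `E` if a model exists. -/
def Consistent (p : τ → ℝ) (E : Set (Finset τ)) : Prop :=
  ∃ Pr, IsModel p E Pr

/-- The probability, under `Pr`, that all tuples of `S` co-exist. -/
def coexistProb (Pr : Finset τ → ℝ) (S : Finset τ) : ℝ :=
  ∑ w ∈ Finset.univ.filter (fun w => S ⊆ w), Pr w

/-!
The models of `p` w.r.t. `E` form a compact polytope in `Finset τ → ℝ`, so the linear functional
`Pr ↦ ∑ w ∈ W, Pr w` attains its minimum and its maximum at extreme points. At an extreme point
`x` no nonzero direction supported on the support of `x` preserves the `|T| + 1` linear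
constraints (total mass and tuple marginals), since `x` could be moved both ways along it. So the
corresponding columns of the `0/1` constraint matrix are linearly independent, `x` is the unique
solution of a nonsingular square `0/1` subsystem whose right-hand side lies in `(∏ den)⁻¹ ℤ`, and
Cramer's rule gives every `x w` the common denominator `det · ∏ den`, where the Leibniz formula
bounds `|det|` by `(|T| + 1)!`. Finally `(|T| + 1)! · a ^ |T| ≤ (m · a) ^ m`.
-/

open Matrix Filter Topology
open scoped Nat

section Extreme

variable {E : Type*} [AddCommGroup E] [Module ℝ E] [TopologicalSpace E] [T2Space E]
  [IsTopologicalAddGroup E] [ContinuousSMul ℝ E] [LocallyConvexSpace ℝ E] {s : Set E}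

theorem IsCompact.exists_mem_extremePoints_of_isMaxOn (hs : IsCompact s) (l : StrongDual ℝ E)
    {y : E} (hy : y ∈ s) (hmax : IsMaxOn l s y) : ∃ x ∈ s.extremePoints ℝ, l x = l y := by
  have hface : IsExposed ℝ s (l.toExposed s) := ContinuousLinearMap.toExposed.isExposed
  obtain ⟨x, hx⟩ := (hface.isCompact hs).extremePoints_nonempty ⟨y, hy, fun z hz => hmax hz⟩
  refine ⟨x, hface.isExtreme.extremePoints_subset_extremePoints hx, ?_⟩
  have hxs := (mem_extremePoints.1 hx).1
  exact le_antisymm (hmax hxs.1) (hxs.2 y hy)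

theorem IsCompact.exists_mem_extremePoints_of_isMinOn (hs : IsCompact s) (l : StrongDual ℝ E)
    {y : E} (hy : y ∈ s) (hmin : IsMinOn l s y) : ∃ x ∈ s.extremePoints ℝ, l x = l y := by
  obtain ⟨x, hx, hlx⟩ := hs.exists_mem_extremePoints_of_isMaxOn (-l) hy hmin.neg
  exact ⟨x, hx, neg_inj.1 hlx⟩

end Extreme

theorem eq_zero_of_mem_extremePoints_of_add_mem_of_sub_mem {E : Type*} [AddCommGroup E]
    [Module ℝ E] {s : Set E} {x d : E} (hx : x ∈ s.extremePoints ℝ) (hadd : x + d ∈ s)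
    (hsub : x - d ∈ s) : d = 0 := by
  have hseg : x ∈ openSegment ℝ (x + d) (x - d) :=
    ⟨1 / 2, 1 / 2, by norm_num, by norm_num, by norm_num, by module⟩
  simpa using (mem_extremePoints.1 hx).2 _ hadd _ hsub hseg

theorem exists_pos_forall_abs_mul_le {κ : Type*} [Finite κ] {x d : κ → ℝ} (hx : 0 ≤ x)
    (hd : ∀ j, x j = 0 → d j = 0) : ∃ ε > 0, ∀ j, |ε * d j| ≤ x j := by
  have hsmall : ∀ᶠ ε in 𝓝[>] (0 : ℝ), ∀ j, |ε * d j| ≤ x j := by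
    refine eventually_all.2 fun j => ?_
    rcases (hx j).eq_or_lt with h | h
    · exact .of_forall fun ε => by simp [hd j h.symm, ← h]
    · have hcont : Continuous fun ε : ℝ => |ε * d j| := by fun_prop
      have : Tendsto (fun ε : ℝ => |ε * d j|) (𝓝 0) (𝓝 0) := by simpa using hcont.tendsto 0
      exact (this.eventually (gt_mem_nhds h)).filter_mono nhdsWithin_le_nhds |>.mono
        fun _ => le_of_lt
  obtain ⟨ε, hε, hεpos⟩ := (hsmall.and self_mem_nhdsWithin).exists
  exact ⟨ε, hεpos, hε⟩

theorem Nat.factorial_succ_mul_pow_le {n a : ℕ} (ha : 1 ≤ a) :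
    (n + 1)! * a ^ n ≤ ((n + 3) * a) ^ (n + 3) := by
  have hfac : (n + 1)! ≤ (n + 3) ^ (n + 3) :=
    calc (n + 1)! ≤ (n + 1) ^ (n + 1) := Nat.factorial_le_pow _
      _ ≤ (n + 3) ^ (n + 1) := Nat.pow_le_pow_left (by omega) _
      _ ≤ (n + 3) ^ (n + 3) := Nat.pow_le_pow_right (by omega) (by omega)
  rw [mul_pow]
  exact Nat.mul_le_mul hfac (Nat.pow_le_pow_right ha (by omega))

theorem exists_nat_div_eq_of_int_mul_eq {v : ℝ} (hv0 : 0 ≤ v) (hv1 : v ≤ 1) {q N : ℤ}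
    (hq : q ≠ 0) (h : q * v = N) : ∃ η δ : ℕ, 0 < δ ∧ η ≤ δ ∧ (δ : ℤ) = |q| ∧ v = η / δ := by
  have hδ : ((q.natAbs : ℕ) : ℝ) = |(q : ℝ)| := by rw [Nat.cast_natAbs, Int.cast_abs]
  have hη : ((N.natAbs : ℕ) : ℝ) = |(q : ℝ)| * v := by
    rw [Nat.cast_natAbs, Int.cast_abs, ← h, abs_mul, abs_of_nonneg hv0]
  have hqpos : (0 : ℝ) < |(q : ℝ)| := abs_pos.2 (Int.cast_ne_zero.2 hq)
  refine ⟨N.natAbs, q.natAbs, Int.natAbs_pos.2 hq, ?_, Int.natCast_natAbs q, ?_⟩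
  · exact_mod_cast (show ((N.natAbs : ℕ) : ℝ) ≤ q.natAbs by
      rw [hη, hδ]; exact mul_le_of_le_one_right hqpos.le hv1)
  · rw [hη, hδ, mul_div_cancel_left₀ v hqpos.ne']

namespace Matrix

variable {ι κ : Type*} [Fintype κ]

theorem submatrix_val_mulVec {R : Type*} [NonUnitalNonAssocSemiring R] {P : κ → Prop}
    [Fintype {j // P j}] (M : Matrix ι κ R) {x : κ → R} (hx : ∀ j, x j ≠ 0 → P j) :
    M.submatrix id (Subtype.val : {j // P j} → κ) *ᵥ (fun j => x j) = M *ᵥ x := by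
  classical
  ext i
  exact (Finset.sum_subtype (univ.filter P) (by simp) fun j => M i j * x j).symm.trans
    (Finset.sum_filter_of_ne fun j _ h => hx j (right_ne_zero_of_mul h))

variable [Fintype ι] {K : Type*} [Field K]

theorem card_le_card_of_mulVec_injective {M : Matrix ι κ K} (hM : Function.Injective M.mulVec) :
    Fintype.card κ ≤ Fintype.card ι := by
  simpa using LinearMap.finrank_le_finrank_of_injective (f := M.mulVecLin) hM

variable [DecidableEq κ]

theorem exists_det_submatrix_ne_zero_of_mulVec_injective {M : Matrix ι κ K}
    (hM : Function.Injective M.mulVec) : ∃ r : κ → ι, (M.submatrix r id).det ≠ 0 := by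
  have hspan : Submodule.span K (Set.range M.row) = ⊤ := by
    refine Submodule.eq_top_of_finrank_eq ?_
    rw [← rank_eq_finrank_span_row, rank, LinearMap.finrank_range_of_inj hM]
  obtain ⟨κ', a, ha, haspan, hali⟩ := exists_linearIndependent' K M.row
  have : Fintype κ' := Fintype.ofInjective a ha
  let b := Module.Basis.mk hali (by rw [haspan, hspan])
  have hcard : Fintype.card κ = Fintype.card κ' := by
    simpa using Module.finrank_eq_card_basis b
  refine ⟨a ∘ Fintype.equivOfCardEq hcard, ?_⟩
  rw [← isUnit_iff_ne_zero, ← isUnit_iff_isUnit_det, ← linearIndependent_rows_iff_isUnit]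
  exact hali.comp _ (Fintype.equivOfCardEq hcard).injective

theorem exists_int_mul_eq_of_mulVec_eq {M : Matrix ι κ ℤ} (hM : ∀ i j, |M i j| ≤ 1)
    (hinj : Function.Injective (M.map (Int.cast : ℤ → ℝ)).mulVec) {c : ι → ℤ} {y : κ → ℝ}
    (hy : M.map (Int.cast : ℤ → ℝ) *ᵥ y = fun i => (c i : ℝ)) :
    ∃ q : ℤ, q ≠ 0 ∧ |q| ≤ (Fintype.card κ)! ∧ ∀ j, ∃ z : ℤ, q * y j = z := by
  obtain ⟨r, hr⟩ := exists_det_submatrix_ne_zero_of_mulVec_injective hinj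
  set A := M.submatrix r id
  have hAcast : (Int.castRingHom ℝ).mapMatrix A = (M.map (Int.cast : ℤ → ℝ)).submatrix r id := rfl
  have hdet : ((A.det : ℤ) : ℝ) = ((M.map (Int.cast : ℤ → ℝ)).submatrix r id).det := by
    rw [← hAcast, ← RingHom.map_det]; rfl
  refine ⟨A.det, fun h => hr (by rw [← hdet, h, Int.cast_zero]), ?_,
    fun j => ⟨(A.adjugate *ᵥ (c ∘ r)) j, ?_⟩⟩
  · simpa using det_le (abv := AbsoluteValue.abs) (A := A) (x := 1) fun i j => hM (r i) j
  · have hAy : (M.map (Int.cast : ℤ → ℝ)).submatrix r id *ᵥ y = fun i => (c (r i) : ℝ) := by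
      ext i; exact congrFun hy (r i)
    -- Cramer's rule: `adj A * A = det A • 1`.
    have hcramer := congrFun (congrArg (((Int.castRingHom ℝ).mapMatrix A).adjugate *ᵥ ·) hAy) j
    simp only [mulVec_mulVec, adjugate_mul, smul_mulVec, one_mulVec, ← hAcast,
      ← RingHom.map_det] at hcramer
    have hcast := RingHom.map_mulVec (Int.castRingHom ℝ) A.adjugate (c ∘ r) j
    rw [← RingHom.mapMatrix_apply, RingHom.map_adjugate] at hcast
    simp only [Pi.smul_apply, smul_eq_mul, eq_intCast] at hcramer hcast
    rw [hcramer, hcast]; rfl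

end Matrix

variable (τ) in
def marginalMatrix : Matrix (Option τ) (Finset τ) ℤ :=
  fun j w => j.elim 1 fun t => if t ∈ w then 1 else 0

omit [Fintype τ] in
theorem abs_marginalMatrix_le_one (j : Option τ) (w : Finset τ) :
    |marginalMatrix τ j w| ≤ 1 := by
  rcases j with _ | t
  · simp [marginalMatrix]
  · by_cases h : t ∈ w <;> simp [marginalMatrix, h]

theorem marginalMatrix_mulVec (x : Finset τ → ℝ) :
    (marginalMatrix τ).map (Int.cast : ℤ → ℝ) *ᵥ x =
      fun j => j.elim (∑ w, x w) fun t => ∑ w ∈ univ.filter (t ∈ ·), x w := by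
  ext (_ | t) <;> simp [marginalMatrix, mulVec, dotProduct, Finset.sum_filter]

theorem isInterp_iff {p : τ → ℝ} {x : Finset τ → ℝ} :
    IsInterp p x ↔
      0 ≤ x ∧ (marginalMatrix τ).map (Int.cast : ℤ → ℝ) *ᵥ x = fun j => j.elim 1 p := by
  simp [IsInterp, marginalMatrix_mulVec, funext_iff, Option.forall, Pi.le_def, eq_comm]

theorem exists_int_eq_prod_mul {p : τ → ℝ} {num den : τ → ℕ} (hden : ∀ t, 0 < den t)
    (hfrac : ∀ t, p t = (num t : ℝ) / (den t : ℝ)) (t : τ) :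
    ∃ c : ℤ, ((∏ s, den s : ℕ) : ℝ) * p t = c := by
  refine ⟨num t * ∏ s ∈ univ.erase t, den s, ?_⟩
  rw [hfrac t, ← mul_prod_erase univ den (mem_univ t)]
  push_cast
  field_simp [(hden t).ne']

section Model

variable {p : τ → ℝ} {E : Set (Finset τ)}

theorem IsModel.add {x d : Finset τ → ℝ} (hx : IsModel p E x)
    (hd : (marginalMatrix τ).map (Int.cast : ℤ → ℝ) *ᵥ d = 0) (hsupp : ∀ w, x w = 0 → d w = 0)
    (hnonneg : 0 ≤ x + d) : IsModel p E (x + d) := by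
  obtain ⟨hint, hE⟩ := hx
  refine ⟨isInterp_iff.2 ⟨hnonneg, ?_⟩, fun w hw => ?_⟩
  · rw [mulVec_add, hd, add_zero, (isInterp_iff.1 hint).2]
  · simp [hE w hw, hsupp w (hE w hw)]

theorem isCompact_setOf_isModel : IsCompact {Pr : Finset τ → ℝ | IsModel p E Pr} := by
  have hsub : {Pr : Finset τ → ℝ | IsModel p E Pr} ⊆ Set.Icc 0 1 := fun x hx => by
    obtain ⟨⟨hx0, hx1, -⟩, -⟩ := hx
    exact ⟨hx0, fun w => (single_le_sum (fun w _ => hx0 w) (mem_univ w)).trans hx1.le⟩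
  refine isCompact_Icc.of_isClosed_subset ?_ hsub
  simp only [IsModel, isInterp_iff, Set.ofPred_and, Set.ofPred_forall]
  exact ((isClosed_le continuous_const continuous_id).inter
    (isClosed_eq (by fun_prop) continuous_const)).inter
    (isClosed_iInter fun w => isClosed_iInter fun _ =>
      isClosed_eq (continuous_apply w) continuous_const)

theorem eq_zero_of_mem_extremePoints_of_mulVec_eq_zero {x d : Finset τ → ℝ}
    (hx : x ∈ {Pr | IsModel p E Pr}.extremePoints ℝ) (hsupp : ∀ w, x w = 0 → d w = 0)
    (hd : (marginalMatrix τ).map (Int.cast : ℤ → ℝ) *ᵥ d = 0) : d = 0 := by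
  have hxm : IsModel p E x := (mem_extremePoints.1 hx).1
  obtain ⟨ε, hε, hεd⟩ := exists_pos_forall_abs_mul_le (isInterp_iff.1 hxm.1).1 hsupp
  have hpert : ∀ s : ℝ, (∀ w, |s * d w| ≤ x w) → IsModel p E (x + s • d) := fun s hs =>
    hxm.add (by rw [mulVec_smul, hd, smul_zero]) (fun w hw => by simp [hsupp w hw])
      fun w => by simpa [neg_le_iff_add_nonneg, add_comm] using (abs_le.1 (hs w)).1
  have hεd' : ∀ w, |-ε * d w| ≤ x w := by simpa using hεd
  have := eq_zero_of_mem_extremePoints_of_add_mem_of_sub_mem hx (hpert ε hεd)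
    (by rw [sub_eq_add_neg, ← neg_smul]; exact hpert (-ε) hεd')
  exact (smul_eq_zero.1 this).resolve_left hε.ne'

theorem mulVec_submatrix_support_injective_of_mem_extremePoints {x : Finset τ → ℝ}
    (hx : x ∈ {Pr | IsModel p E Pr}.extremePoints ℝ) :
    Function.Injective (((marginalMatrix τ).submatrix id
      (Subtype.val : {w // x w ≠ 0} → Finset τ)).map (Int.cast : ℤ → ℝ)).mulVec := by
  rw [← coe_mulVecLin, injective_iff_map_eq_zero]
  intro d hd
  let d' : Finset τ → ℝ := fun w => if h : x w ≠ 0 then d ⟨w, h⟩ else 0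
  have hsupp : ∀ w, x w = 0 → d' w = 0 := fun w hw => by simp [d', hw]
  have hrestrict : (fun w : {w // x w ≠ 0} => d' w) = d := by ext ⟨w, hw⟩; simp [d', hw]
  have hd' : d' = 0 := eq_zero_of_mem_extremePoints_of_mulVec_eq_zero hx hsupp <| by
    rw [← ((marginalMatrix τ).map Int.cast).submatrix_val_mulVec (P := (x · ≠ 0))
      fun w hw hxw => hw (hsupp w hxw), hrestrict, submatrix_map, ← hd, coe_mulVecLin]
  rw [← hrestrict, hd']
  rfl

theorem exists_int_mul_eq_of_mem_extremePoints {x : Finset τ → ℝ}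
    (hx : x ∈ {Pr | IsModel p E Pr}.extremePoints ℝ) {num den : τ → ℕ} (hden : ∀ t, 0 < den t)
    (hfrac : ∀ t, p t = (num t : ℝ) / (den t : ℝ)) :
    ∃ q : ℤ, q ≠ 0 ∧ |q| ≤ (Fintype.card τ + 1)! * ∏ t, den t ∧
      ∀ w, ∃ z : ℤ, q * x w = z := by
  set D : ℕ := ∏ t, den t
  have hD : 0 < D := prod_pos fun t _ => hden t
  have hinj := mulVec_submatrix_support_injective_of_mem_extremePoints hx
  obtain ⟨c, hc⟩ : ∃ c : Option τ → ℤ, ∀ j, (D : ℝ) * j.elim 1 p = c j := by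
    choose c hc using exists_int_eq_prod_mul hden hfrac
    exact ⟨fun j => j.elim D c, by rintro (_ | t); exacts [by simp, hc t]⟩
  have hsys : ((marginalMatrix τ).submatrix id Subtype.val).map (Int.cast : ℤ → ℝ) *ᵥ
      (fun w : {w // x w ≠ 0} => ((D : ℝ) • x) w) = fun j => (c j : ℝ) := by
    rw [← submatrix_map, ((marginalMatrix τ).map Int.cast).submatrix_val_mulVec (P := (x · ≠ 0))
      fun w hw hxw => hw (by simp [hxw]), mulVec_smul,
      (isInterp_iff.1 (mem_extremePoints.1 hx).1.1).2]
    exact funext hc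
  obtain ⟨q, hq, hqle, hz⟩ := exists_int_mul_eq_of_mulVec_eq
    (M := (marginalMatrix τ).submatrix id Subtype.val) (fun j w => abs_marginalMatrix_le_one j w.1)
    hinj hsys
  have hcard : Fintype.card {w // x w ≠ 0} ≤ Fintype.card τ + 1 := by
    simpa using card_le_card_of_mulVec_injective hinj
  refine ⟨q * D, mul_ne_zero hq (Int.natCast_ne_zero.2 hD.ne'), ?_, fun w => ?_⟩
  · rw [abs_mul, Nat.abs_cast]
    gcongr
    exact hqle.trans (by exact_mod_cast Nat.factorial_le hcard)
  · by_cases hw : x w = 0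
    · exact ⟨0, by simp [hw]⟩
    · obtain ⟨z, hz⟩ := hz ⟨w, hw⟩
      refine ⟨z, ?_⟩
      rw [← hz, Pi.smul_apply, smul_eq_mul]
      push_cast
      ring

theorem exists_nat_div_eq_sum_of_mem_extremePoints {x : Finset τ → ℝ}
    (hx : x ∈ {Pr | IsModel p E Pr}.extremePoints ℝ) {num den : τ → ℕ} (hden : ∀ t, 0 < den t)
    (hfrac : ∀ t, p t = (num t : ℝ) / (den t : ℝ)) (W : Finset (Finset τ)) :
    ∃ η δ : ℕ, 0 < δ ∧ η ≤ δ ∧ δ ≤ (Fintype.card τ + 1)! * ∏ t, den t ∧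
      ∑ w ∈ W, x w = η / δ := by
  obtain ⟨q, hq, hqle, hz⟩ := exists_int_mul_eq_of_mem_extremePoints hx hden hfrac
  choose z hz using hz
  obtain ⟨⟨hx0, hx1, -⟩, -⟩ := (mem_extremePoints.1 hx).1
  have hW0 : 0 ≤ ∑ w ∈ W, x w := sum_nonneg fun w _ => hx0 w
  have hW1 : ∑ w ∈ W, x w ≤ 1 := hx1 ▸ sum_le_univ_sum_of_nonneg hx0
  obtain ⟨η, δ, hδ, hηδ, hδq, hxW⟩ := exists_nat_div_eq_of_int_mul_eq hW0 hW1 hq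
    (N := ∑ w ∈ W, z w) (by push_cast; rw [mul_sum]; exact sum_congr rfl fun w _ => hz w)
  exact ⟨η, δ, hδ, hηδ, by omega, hxW⟩

end Model

theorem query_probability_bounded_fractions_general
    [Nonempty τ]
    (p : τ → ℝ)
    (num den : τ → ℕ) (hden : ∀ t, 0 < den t)
    (hfrac : ∀ t, p t = (num t : ℝ) / (den t : ℝ))
    (a : ℕ) (ha : a = Finset.univ.sup (fun t => max (num t) (den t)))
    (m : ℕ) (hm : m = Fintype.card τ + 3)
    (E : Set (Finset τ))
    (W : Finset (Finset τ)) (pmin pmax : ℝ)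
    (hmin : IsLeast {x : ℝ | ∃ Pr, IsModel p E Pr ∧ (∑ w ∈ W, Pr w) = x} pmin)
    (hmax : IsGreatest {x : ℝ | ∃ Pr, IsModel p E Pr ∧ (∑ w ∈ W, Pr w) = x} pmax) :
    (∃ η δ : ℕ, 0 < δ ∧ η ≤ (m * a) ^ m ∧ δ ≤ (m * a) ^ m ∧
        pmin = (η : ℝ) / (δ : ℝ)) ∧
    (∃ η δ : ℕ, 0 < δ ∧ η ≤ (m * a) ^ m ∧ δ ≤ (m * a) ^ m ∧
        pmax = (η : ℝ) / (δ : ℝ)) := by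
  have hdena : ∀ t, den t ≤ a := fun t =>
    ha ▸ (le_max_right _ _).trans (le_sup (f := fun t => max (num t) (den t)) (mem_univ t))
  have hbound : (Fintype.card τ + 1)! * ∏ t, den t ≤ (m * a) ^ m := by
    subst hm
    calc _ ≤ (Fintype.card τ + 1)! * a ^ Fintype.card τ := by
          gcongr; simpa using prod_le_pow_card univ den a fun t _ => hdena t
      _ ≤ _ := Nat.factorial_succ_mul_pow_le ((hden (Classical.arbitrary τ)).trans_le (hdena _))
  have hvertex : ∀ x ∈ {Pr | IsModel p E Pr}.extremePoints ℝ, ∃ η δ : ℕ, 0 < δ ∧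
      η ≤ (m * a) ^ m ∧ δ ≤ (m * a) ^ m ∧ ∑ w ∈ W, x w = η / δ := fun x hx => by
    obtain ⟨η, δ, hδ, hηδ, hδle, hxW⟩ := exists_nat_div_eq_sum_of_mem_extremePoints hx hden hfrac W
    exact ⟨η, δ, hδ, hηδ.trans (hδle.trans hbound), hδle.trans hbound, hxW⟩
  let ℓ : StrongDual ℝ (Finset τ → ℝ) := ∑ w ∈ W, ContinuousLinearMap.proj w
  have hℓ : ∀ Pr, ℓ Pr = ∑ w ∈ W, Pr w := fun Pr => by simp [ℓ]
  obtain ⟨⟨Prmin, hPrmin, rfl⟩, hleast⟩ := hmin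
  obtain ⟨⟨Prmax, hPrmax, rfl⟩, hgreatest⟩ := hmax
  obtain ⟨xmin, hxmin, hℓmin⟩ := isCompact_setOf_isModel.exists_mem_extremePoints_of_isMinOn ℓ
    hPrmin fun Pr hPr => by simpa [hℓ] using hleast ⟨Pr, hPr, rfl⟩
  obtain ⟨xmax, hxmax, hℓmax⟩ := isCompact_setOf_isModel.exists_mem_extremePoints_of_isMaxOn ℓ
    hPrmax fun Pr hPr => by simpa [hℓ] using hgreatest ⟨Pr, hPr, rfl⟩
  rw [hℓ, hℓ] at hℓmin hℓmax
  exact ⟨hℓmin ▸ hvertex xmin hxmin, hℓmax ▸ hvertex xmax hxmax⟩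

/-- if the tuple probabilities are rationals `num t / den t`,
`a` is the maximum of all numerators and denominators, and `m = |T| + 3`, then
the minimum and maximum probabilities of a query answer (over all models) are
rationals `η/δ` with `0 ≤ η ≤ (m·a)^m` and `0 < δ ≤ (m·a)^m`. -/
theorem query_probability_bounded_fractions
    [Nonempty τ]
    (p : τ → ℝ) (hp : ∀ t, 0 ≤ p t ∧ p t ≤ 1)
    (num den : τ → ℕ) (hden : ∀ t, 0 < den t)
    (hfrac : ∀ t, p t = (num t : ℝ) / (den t : ℝ))
    (a : ℕ) (ha : a = Finset.univ.sup (fun t => max (num t) (den t)))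
    (m : ℕ) (hm : m = Fintype.card τ + 3)
    (E : Set (Finset τ)) (hedges : ∀ e ∈ E, e.Nonempty)
    (hcons : Consistent p E)
    (W : Finset (Finset τ)) (pmin pmax : ℝ)
    (hmin : IsLeast {x : ℝ | ∃ Pr, IsModel p E Pr ∧ (∑ w ∈ W, Pr w) = x} pmin)
    (hmax : IsGreatest {x : ℝ | ∃ Pr, IsModel p E Pr ∧ (∑ w ∈ W, Pr w) = x} pmax) :
    (∃ η δ : ℕ, 0 < δ ∧ η ≤ (m * a) ^ m ∧ δ ≤ (m * a) ^ m ∧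
        pmin = (η : ℝ) / (δ : ℝ)) ∧
    (∃ η δ : ℕ, 0 < δ ∧ η ≤ (m * a) ^ m ∧ δ ≤ (m * a) ^ m ∧
        pmax = (η : ℝ) / (δ : ℝ)) :=
  query_probability_bounded_fractions_general p num den hden hfrac a ha m hm E W pmin pmax hmin hmax
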